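/- (Permutation formula for v_∞ in the bistochastic case) Let N = M and μ_i = ν_j = 1/N for all i, j, so that Π(μ,ν) is (up to the factor 1/N) the set of N×N bistochastic matrices. Then v_∞ := min_{γ∈Π(μ,ν)} max{c_{ij} : γ^{ij} > 0} = min over permutations σ of {1,…,N} of max_{1≤i≤N} c_{i,σ(i)}; in particular the minimum of J_∞ is attained at a permutation matrix divided by N. -/

import Mathlib

/-!
By Birkhoff's theorem a bistochastic matrix is a convex combination of permutation matrices, so
its support contains the graph of some permutation `σ`. Hence `J_∞` of any plan is at least
`J_∞` of the plan `σ / N`, and `v_∞` is the least value of `J_∞` over the finitely many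
permutation plans.
-/

open scoped BigOperators

noncomputable section

/-- Discrete transport plans: N×M matrices with nonnegative entries, row sums μ and
    column sums ν. -/
def discreteCouplings {N M : ℕ} (μ : Fin N → ℝ) (ν : Fin M → ℝ) :
    Set (Fin N → Fin M → ℝ) :=
  {γ | (∀ i j, 0 ≤ γ i j) ∧ (∀ i, ∑ j, γ i j = μ i) ∧ (∀ j, ∑ i, γ i j = ν j)}

/-- J_∞(γ) = max{c_ij : γ^{ij} > 0} (as a supremum of the corresponding set of reals). -/
def JinfD {N M : ℕ} (c : Fin N → Fin M → ℝ) (γ : Fin N → Fin M → ℝ) : ℝ :=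
  sSup {r | ∃ i j, 0 < γ i j ∧ c i j = r}

/-- v_∞ = min_{γ ∈ Π(μ,ν)} J_∞(γ) in the discrete setting. -/
def vInfD {N M : ℕ} (c : Fin N → Fin M → ℝ) (μ : Fin N → ℝ) (ν : Fin M → ℝ) : ℝ :=
  sInf {r | ∃ γ ∈ discreteCouplings μ ν, JinfD c γ = r}

open Finset

theorem exists_perm_forall_pos_of_mem_doublyStochastic {R n : Type*} [Fintype n] [DecidableEq n]
    [Field R] [LinearOrder R] [IsStrictOrderedRing R] {M : Matrix n n R}
    (hM : M ∈ doublyStochastic R n) : ∃ σ : Equiv.Perm n, ∀ i, 0 < M i (σ i) := by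
  obtain ⟨w, hw_nonneg, hw_sum, rfl⟩ := exists_eq_sum_perm_of_mem_doublyStochastic hM
  obtain ⟨σ, -, hσ⟩ := exists_ne_zero_of_sum_ne_zero (hw_sum.symm ▸ one_ne_zero : ∑ σ, w σ ≠ 0)
  refine ⟨σ, fun i => ?_⟩
  calc (0 : R) < w σ := (hw_nonneg σ).lt_of_ne' hσ
    _ = (w σ • σ.permMatrix R) i (σ i) := by simp [Equiv.toPEquiv_apply]
    _ ≤ (∑ τ, w τ • τ.permMatrix R) i (σ i) := by
      rw [Matrix.sum_apply]
      refine single_le_sum (f := fun τ => (w τ • τ.permMatrix R) i (σ i)) (fun τ _ => ?_)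
        (mem_univ σ)
      simp only [Matrix.smul_apply, smul_eq_mul, PEquiv.toMatrix_apply]
      split_ifs <;> simp [hw_nonneg τ]

theorem JinfD_mono {N M : ℕ} (c : Fin N → Fin M → ℝ) {γ γ' : Fin N → Fin M → ℝ}
    (hsupp : ∀ i j, 0 < γ i j → 0 < γ' i j) (hne : ∃ i j, 0 < γ i j) :
    JinfD c γ ≤ JinfD c γ' := by
  obtain ⟨i, j, hij⟩ := hne
  have hfin : {r | ∃ i j, 0 < γ' i j ∧ c i j = r}.Finite :=
    (Set.finite_range fun p : Fin N × Fin M => c p.1 p.2).subset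
      (by rintro _ ⟨i, j, -, rfl⟩; exact ⟨(i, j), rfl⟩)
  refine csSup_le_csSup hfin.bddAbove ⟨c i j, i, j, hij, rfl⟩ ?_
  rintro _ ⟨i, j, hij, rfl⟩
  exact ⟨i, j, hsupp i j hij, rfl⟩

section UniformMarginals

variable {N : ℕ} {a : ℝ}

def scaledPerm (a : ℝ) (σ : Equiv.Perm (Fin N)) : Fin N → Fin N → ℝ :=
  fun i j => if j = σ i then a else 0

theorem scaledPerm_mem_discreteCouplings (ha : 0 ≤ a) (σ : Equiv.Perm (Fin N)) :
    scaledPerm a σ ∈ discreteCouplings (fun _ => a) (fun _ => a) := by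
  refine ⟨fun i j => ?_, fun i => ?_, fun j => ?_⟩
  · unfold scaledPerm; split_ifs <;> simp [ha]
  · simp [scaledPerm]
  · simp [scaledPerm, ← Equiv.symm_apply_eq]

theorem JinfD_scaledPerm (c : Fin N → Fin N → ℝ) (ha : 0 < a) (σ : Equiv.Perm (Fin N)) :
    JinfD c (scaledPerm a σ) = sSup (Set.range fun i => c i (σ i)) := by
  unfold JinfD scaledPerm
  congr 1
  ext r
  constructor
  · rintro ⟨i, j, hij, rfl⟩
    split_ifs at hij with h
    · exact ⟨i, by rw [h]⟩
    · exact absurd hij (lt_irrefl 0)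
  · rintro ⟨i, rfl⟩
    exact ⟨i, σ i, by simp [ha], rfl⟩

theorem exists_perm_forall_pos_of_mem_discreteCouplings (ha : 0 < a)
    {γ : Fin N → Fin N → ℝ} (hγ : γ ∈ discreteCouplings (fun _ => a) (fun _ => a)) :
    ∃ σ : Equiv.Perm (Fin N), ∀ i, 0 < γ i (σ i) := by
  obtain ⟨M, hM, hγM⟩ := (exists_mem_doublyStochastic_eq_smul_iff (M := γ) ha.le).2 hγ
  obtain ⟨σ, hσ⟩ := exists_perm_forall_pos_of_mem_doublyStochastic hM
  exact ⟨σ, fun i => by rw [hγM]; exact mul_pos ha (hσ i)⟩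

theorem exists_JinfD_scaledPerm_le (c : Fin N → Fin N → ℝ) (hN : 0 < N) (ha : 0 < a)
    {γ : Fin N → Fin N → ℝ} (hγ : γ ∈ discreteCouplings (fun _ => a) (fun _ => a)) :
    ∃ σ : Equiv.Perm (Fin N), JinfD c (scaledPerm a σ) ≤ JinfD c γ := by
  obtain ⟨σ, hσ⟩ := exists_perm_forall_pos_of_mem_discreteCouplings ha hγ
  refine ⟨σ, JinfD_mono c (fun i j hij => ?_) ⟨⟨0, hN⟩, σ ⟨0, hN⟩, by simp [scaledPerm, ha]⟩⟩
  obtain rfl : j = σ i := by by_contra h; simp [scaledPerm, h] at hij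
  exact hσ i

theorem exists_vInfD_eq_JinfD_scaledPerm (c : Fin N → Fin N → ℝ) (hN : 0 < N) (ha : 0 < a) :
    ∃ σ₀ : Equiv.Perm (Fin N), vInfD c (fun _ => a) (fun _ => a) = JinfD c (scaledPerm a σ₀) ∧
      ∀ σ, JinfD c (scaledPerm a σ₀) ≤ JinfD c (scaledPerm a σ) := by
  obtain ⟨σ₀, -, hσ₀⟩ := exists_min_image univ (fun σ => JinfD c (scaledPerm a σ)) univ_nonempty
  refine ⟨σ₀, IsLeast.csInf_eq ⟨⟨_, scaledPerm_mem_discreteCouplings ha.le σ₀, rfl⟩, ?_⟩,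
    fun σ => hσ₀ σ (mem_univ σ)⟩
  rintro _ ⟨γ, hγ, rfl⟩
  obtain ⟨σ, hσ⟩ := exists_JinfD_scaledPerm_le c hN ha hγ
  exact (hσ₀ σ (mem_univ σ)).trans hσ

end UniformMarginals

theorem vInf_bistochastic_perm_general {d N : ℕ} (hN : 0 < N)
    (x y : Fin N → EuclideanSpace ℝ (Fin d))
    (c : EuclideanSpace ℝ (Fin d) × EuclideanSpace ℝ (Fin d) → ℝ) :
    vInfD (fun i j => c (x i, y j)) (fun _ => (1 : ℝ) / N) (fun _ => (1 : ℝ) / N) =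
      sInf {r | ∃ σ : Equiv.Perm (Fin N), sSup {s | ∃ i, c (x i, y (σ i)) = s} = r} ∧
    ∃ σ : Equiv.Perm (Fin N),
      (fun i j => if j = σ i then (1 : ℝ) / N else 0) ∈
        discreteCouplings (fun _ : Fin N => (1 : ℝ) / N) (fun _ : Fin N => (1 : ℝ) / N) ∧
      JinfD (fun i j => c (x i, y j)) (fun i j => if j = σ i then (1 : ℝ) / N else 0) =
        vInfD (fun i j => c (x i, y j)) (fun _ => (1 : ℝ) / N) (fun _ => (1 : ℝ) / N) := by
  have ha : (0 : ℝ) < 1 / N := by positivity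
  obtain ⟨σ₀, hv, hmin⟩ := exists_vInfD_eq_JinfD_scaledPerm (fun i j => c (x i, y j)) hN ha
  simp only [JinfD_scaledPerm _ ha] at hv hmin
  have hperm : IsLeast {r | ∃ σ : Equiv.Perm (Fin N), sSup {s | ∃ i, c (x i, y (σ i)) = s} = r}
      (sSup (Set.range fun i => c (x i, y (σ₀ i)))) := by
    refine ⟨⟨σ₀, rfl⟩, ?_⟩
    rintro _ ⟨σ, rfl⟩
    exact hmin σ
  exact ⟨hv.trans hperm.csInf_eq.symm,
    σ₀, scaledPerm_mem_discreteCouplings ha.le σ₀, (JinfD_scaledPerm _ ha σ₀).trans hv.symm⟩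

/-- (Permutation formula for v_∞ in the bistochastic case) When N = M and all weights equal
    1/N, one has v_∞ = min_{σ ∈ Σ(N)} max_i c_{i,σ(i)}, and the minimum of J_∞ is attained at
    (1/N times) a permutation matrix. -/
theorem vInf_bistochastic_perm {d N : ℕ} (hN : 0 < N)
    (x y : Fin N → EuclideanSpace ℝ (Fin d))
    (c : EuclideanSpace ℝ (Fin d) × EuclideanSpace ℝ (Fin d) → ℝ)
    (hc : Continuous c) (hc0 : ∀ z, 0 ≤ c z) :
    vInfD (fun i j => c (x i, y j)) (fun _ => (1 : ℝ) / N) (fun _ => (1 : ℝ) / N) =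
      sInf {r | ∃ σ : Equiv.Perm (Fin N), sSup {s | ∃ i, c (x i, y (σ i)) = s} = r} ∧
    ∃ σ : Equiv.Perm (Fin N),
      (fun i j => if j = σ i then (1 : ℝ) / N else 0) ∈
        discreteCouplings (fun _ : Fin N => (1 : ℝ) / N) (fun _ : Fin N => (1 : ℝ) / N) ∧
      JinfD (fun i j => c (x i, y j)) (fun i j => if j = σ i then (1 : ℝ) / N else 0) =
        vInfD (fun i j => c (x i, y j)) (fun _ => (1 : ℝ) / N) (fun _ => (1 : ℝ) / N) :=
  vInf_bistochastic_perm_general hN x y c
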